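/- Let I be a monomial ideal of R = K[x_1,…,x_n], let m = (x_1,…,x_n), and let y_1,…,y_s be distinct variables of R such that for each i = 1,…,s there exist an integer α_i ≥ 1 and a monomial ideal J_i of R with y_i ∉ supp(J_i), I + (y_i^{α_i}) = J_i + (y_i^{α_i}), and m∖y_i ∉ Ass(R/J_i). If ∏_{i=1}^s y_i^{α_i} ∈ I, then m ∉ Ass(R/I). -/

import Mathlib

/-!
If `m ∈ Ass(R/I)` for the monomial ideal `I`, then `m` is the annihilator of a monomial `x^e ∉ I`
with `x_j x^e ∈ I` for all `j`. If `α_i ≤ e(y_i)` for every `i`, then, the `y_i` being distinct,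
`∏ y_i^{α_i}` divides `x^e`, which would put `x^e` in `I`. Otherwise `e(y_i) < α_i` for some `i`,
and `x^e` still witnesses `m ∈ Ass(R/(I + (y_i^{α_i}))) = Ass(R/(J_i + (y_i^{α_i})))`. As `J_i`
does not involve `y_i`, removing the `y_i`-part of `x^e` gives a monomial whose annihilator
modulo `J_i` is `m ∖ y_i`.
-/

open MvPolynomial

/-- `I` is an ideal of `K[x_1,…,x_n]` generated by monomials. -/
def IsMonomialIdeal {K : Type*} [Field K] {n : ℕ}
    (I : Ideal (MvPolynomial (Fin n) K)) : Prop :=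
  ∃ S : Set (Fin n →₀ ℕ),
    I = Ideal.span ((fun e => MvPolynomial.monomial e (1 : K)) '' S)

/-- `I` is a monomial ideal admitting a monomial generating set in which no
monomial is divisible by a variable `x_i` with `i ∈ A`; equivalently, `I` is a
monomial ideal whose support is disjoint from `A`. -/
def MonomialIdealAvoiding {K : Type*} [Field K] {n : ℕ} (A : Set (Fin n))
    (I : Ideal (MvPolynomial (Fin n) K)) : Prop :=
  ∃ S : Set (Fin n →₀ ℕ), (∀ e ∈ S, ∀ i ∈ A, e i = 0) ∧
    I = Ideal.span ((fun e => MvPolynomial.monomial e (1 : K)) '' S)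

theorem Ideal.mem_colon_bot_mk_iff {R : Type*} [CommRing R] (I : Ideal R) (f r : R) :
    r ∈ (⊥ : Submodule R (R ⧸ I)).colon {Ideal.Quotient.mk I f} ↔ r * f ∈ I := by
  rw [Submodule.mem_colon_singleton, Submodule.mem_bot, Algebra.smul_def,
    Ideal.Quotient.algebraMap_eq, ← map_mul, Ideal.Quotient.eq_zero_iff_mem]

namespace MvPolynomial

variable {σ R : Type*}

section CommSemiring

variable [CommSemiring R]

theorem monomial_one_mem_span_monomial_image_iff [Nontrivial R] {S : Set (σ →₀ ℕ)}
    {e : σ →₀ ℕ} :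
    monomial e (1 : R) ∈ Ideal.span ((fun e => monomial e (1 : R)) '' S) ↔ ∃ g ∈ S, g ≤ e := by
  classical
  simp [mem_ideal_span_monomial_image, support_monomial]

theorem X_mul_monomial_one (j : σ) (e : σ →₀ ℕ) :
    (X j : MvPolynomial σ R) * monomial e 1 = monomial (e + Finsupp.single j 1) 1 := by
  rw [monomial_add_single, pow_one, mul_comm]

theorem span_monomial_image_sup_span_X_pow (S : Set (σ →₀ ℕ)) (y : σ) (a : ℕ) :
    Ideal.span ((fun e => monomial e (1 : R)) '' S) ⊔ Ideal.span {X y ^ a} =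
      Ideal.span ((fun e => monomial e (1 : R)) '' insert (Finsupp.single y a) S) := by
  rw [Set.image_insert_eq, Ideal.span_insert, X_pow_eq_monomial, sup_comm]

theorem prod_X_pow_dvd_monomial {ι : Type*} [Fintype ι] {y : ι → σ} (hy : y.Injective)
    {α : ι → ℕ} {e : σ →₀ ℕ} (h : ∀ i, α i ≤ e (y i)) :
    ∏ i, (X (y i) : MvPolynomial σ R) ^ α i ∣ monomial e 1 := by
  classical
  calc ∏ i, (X (y i) : MvPolynomial σ R) ^ α i
      ∣ ∏ i, X (y i) ^ e (y i) :=
        Finset.prod_dvd_prod_of_dvd _ _ fun i _ => pow_dvd_pow _ (h i)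
    _ = ∏ k ∈ Finset.univ.map ⟨y, hy⟩, X k ^ e k := by rw [Finset.prod_map]; rfl
    _ ∣ ∏ k ∈ Finset.univ.map ⟨y, hy⟩ ∪ e.support, X k ^ e k :=
        Finset.prod_dvd_prod_of_subset _ _ _ Finset.subset_union_left
    _ = monomial e 1 := by
        rw [monomial_eq, C_1, one_mul,
          Finsupp.prod_of_support_subset _ Finset.subset_union_right _ fun _ _ => pow_zero _]

theorem monomial_one_notMem_span_monomial_image_insert [Nontrivial R]
    {S : Set (σ →₀ ℕ)} {e : σ →₀ ℕ} {y : σ} {a : ℕ}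
    (he : monomial e (1 : R) ∉ Ideal.span ((fun e => monomial e (1 : R)) '' S)) (hy : e y < a) :
    monomial e (1 : R) ∉
      Ideal.span ((fun e => monomial e (1 : R)) '' insert (Finsupp.single y a) S) := by
  rw [monomial_one_mem_span_monomial_image_iff]
  rintro ⟨g, rfl | hg, hge⟩
  · exact hy.not_ge (Finsupp.single_le_iff.1 hge)
  · exact he (monomial_one_mem_span_monomial_image_iff.2 ⟨g, hg, hge⟩)

end CommSemiring

section CommRing

variable [CommRing R]

theorem sub_aeval_mem {P : Ideal (MvPolynomial σ R)} {g : σ → MvPolynomial σ R}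
    (hg : ∀ j, X j - g j ∈ P) (f : MvPolynomial σ R) : f - aeval g f ∈ P := by
  induction f using MvPolynomial.induction_on with
  | C r => simp
  | add f f' hf hf' => simpa [add_sub_add_comm] using P.add_mem hf hf'
  | mul_X f j hf =>
    rw [map_mul, aeval_X,
      show f * X j - aeval g f * g j = (f - aeval g f) * X j + aeval g f * (X j - g j) by ring]
    exact P.add_mem (P.mul_mem_right _ hf) (P.mul_mem_left _ (hg j))

theorem isPrime_span_X_image [IsDomain R] (A : Set σ) :
    (Ideal.span (X '' A : Set (MvPolynomial σ R))).IsPrime := by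
  classical
  let φ := aeval (R := R) fun j => if j ∈ A then 0 else (X j : MvPolynomial σ R)
  suffices Ideal.span (X '' A) = RingHom.ker φ from this ▸ RingHom.ker_isPrime φ
  refine le_antisymm (Ideal.span_le.2 ?_) fun f hf => ?_
  · rintro _ ⟨j, hj, rfl⟩
    simp [φ, hj]
  · have hφ (j : σ) :
        (X j : MvPolynomial σ R) - (if j ∈ A then 0 else X j) ∈ Ideal.span (X '' A) := by
      split_ifs with hj
      · rw [sub_zero]
        exact Ideal.subset_span (Set.mem_image_of_mem X hj)
      · simp
    have h := sub_aeval_mem hφ f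
    rwa [show φ f = 0 from hf, sub_zero] at h

theorem span_X_image_compl_mem_associatedPrimes [IsDomain R] {A : Set σ} {T : Set (σ →₀ ℕ)}
    (hT : ∀ g ∈ T, ∀ i ∈ A, g i = 0) {d : σ →₀ ℕ}
    (hd : monomial d (1 : R) ∉ Ideal.span ((fun e => monomial e (1 : R)) '' T))
    (hX : ∀ j ∉ A, X j * monomial d (1 : R) ∈ Ideal.span ((fun e => monomial e (1 : R)) '' T)) :
    Ideal.span (X '' Aᶜ) ∈ associatedPrimes (MvPolynomial σ R)
      (MvPolynomial σ R ⧸ Ideal.span ((fun e => monomial e (1 : R)) '' T)) := by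
  set J := Ideal.span ((fun e => monomial e (1 : R)) '' T)
  have hP := isPrime_span_X_image (R := R) Aᶜ
  refine ⟨hP, Ideal.Quotient.mk J (monomial d 1), ?_⟩
  suffices h : (⊥ : Submodule _ (MvPolynomial σ R ⧸ J)).colon {Ideal.Quotient.mk J (monomial d 1)}
      = Ideal.span (X '' Aᶜ) by
    rw [h, hP.radical]
  refine le_antisymm (fun r hr => ?_) (Ideal.span_le.2 ?_)
  · rw [Ideal.mem_colon_bot_mk_iff, mem_ideal_span_monomial_image] at hr
    rw [mem_ideal_span_X_image]
    by_contra! ⟨u, hu, huA⟩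
    obtain ⟨g, hg, hgu⟩ := hr (u + d) <| by
      rwa [mem_support_iff, coeff_mul_monomial, mul_one, ← mem_support_iff]
    -- `g` lives on `A` and `u` off `A`, so `g ≤ u + d` forces `g ≤ d`.
    refine hd (monomial_one_mem_span_monomial_image_iff.2 ⟨g, hg, fun i => ?_⟩)
    by_cases hi : i ∈ A
    · simp [hT g hg i hi]
    · simpa [huA i hi] using hgu i
  · rintro _ ⟨j, hj, rfl⟩
    exact (Ideal.mem_colon_bot_mk_iff J _ _).2 (hX j hj)

theorem span_range_X_mem_associatedPrimes_iff [Finite σ] [IsDomain R] [IsNoetherianRing R]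
    {S : Set (σ →₀ ℕ)} :
    Ideal.span (Set.range X) ∈ associatedPrimes (MvPolynomial σ R)
        (MvPolynomial σ R ⧸ Ideal.span ((fun e => monomial e (1 : R)) '' S)) ↔
      ∃ e, monomial e (1 : R) ∉ Ideal.span ((fun e => monomial e (1 : R)) '' S) ∧
        ∀ j, X j * monomial e (1 : R) ∈ Ideal.span ((fun e => monomial e (1 : R)) '' S) := by
  set I := Ideal.span ((fun e => monomial e (1 : R)) '' S)
  constructor
  · intro hm
    obtain ⟨hp, x, hx⟩ := isAssociatedPrime_iff.1 hm
    obtain ⟨f, rfl⟩ := Ideal.Quotient.mk_surjective x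
    have hann (r : MvPolynomial σ R) : r ∈ Ideal.span (Set.range X) ↔ r * f ∈ I := by
      rw [hx, Ideal.mem_colon_bot_mk_iff]
    have hf : f ∉ I := fun hf =>
      hp.ne_top ((Ideal.eq_top_iff_one _).2 ((hann 1).2 (by rwa [one_mul])))
    rw [mem_ideal_span_monomial_image] at hf
    push Not at hf
    obtain ⟨e, he, heS⟩ := hf
    refine ⟨e, fun h => ?_, fun j => ?_⟩
    · obtain ⟨g, hg, hge⟩ := monomial_one_mem_span_monomial_image_iff.1 h
      exact heS g hg hge
    · obtain ⟨g, hg, hge⟩ := mem_ideal_span_monomial_image.1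
        ((hann (X j)).1 (Ideal.subset_span ⟨j, rfl⟩)) (e + Finsupp.single j 1)
        (by rwa [mem_support_iff, mul_comm, coeff_mul_X, ← mem_support_iff])
      rw [X_mul_monomial_one, monomial_one_mem_span_monomial_image_iff]
      exact ⟨g, hg, hge⟩
  · rintro ⟨e, he, heX⟩
    simpa using span_X_image_compl_mem_associatedPrimes (A := ∅) (by simp) he (fun j _ => heX j)

theorem span_X_image_compl_singleton_mem_associatedPrimes [Finite σ] [IsDomain R]
    [IsNoetherianRing R] {T : Set (σ →₀ ℕ)} {y : σ} (hT : ∀ g ∈ T, g y = 0) {a : ℕ}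
    (hm : Ideal.span (Set.range X) ∈ associatedPrimes (MvPolynomial σ R)
      (MvPolynomial σ R ⧸ Ideal.span ((fun e => monomial e (1 : R)) '' T) ⊔ Ideal.span {X y ^ a})) :
    Ideal.span (X '' {y}ᶜ) ∈ associatedPrimes (MvPolynomial σ R)
      (MvPolynomial σ R ⧸ Ideal.span ((fun e => monomial e (1 : R)) '' T)) := by
  classical
  rw [span_monomial_image_sup_span_X_pow, span_range_X_mem_associatedPrimes_iff] at hm
  obtain ⟨e, he, heX⟩ := hm
  simp_rw [X_mul_monomial_one, monomial_one_mem_span_monomial_image_iff] at he heX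
  push Not at he
  have hle : e.erase y ≤ e := fun k => by
    rw [Finsupp.erase_apply]
    split_ifs <;> simp
  refine span_X_image_compl_mem_associatedPrimes (d := e.erase y)
    (fun g hg i hi => (Set.mem_singleton_iff.1 hi) ▸ hT g hg) ?_ fun j hj => ?_
  · rw [monomial_one_mem_span_monomial_image_iff]
    rintro ⟨g, hg, hgd⟩
    exact he g (Set.mem_insert_of_mem _ hg) (hgd.trans hle)
  · rw [Set.mem_singleton_iff] at hj
    rw [X_mul_monomial_one, monomial_one_mem_span_monomial_image_iff]
    obtain ⟨g, rfl | hg, hge⟩ := heX j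
    · refine (he _ (Set.mem_insert _ _) (Finsupp.single_le_iff.2 ?_)).elim
      simpa [Finsupp.single_apply, Ne.symm hj] using Finsupp.single_le_iff.1 hge
    · refine ⟨g, hg, fun k => ?_⟩
      by_cases hk : k = y
      · simp [hk, hT g hg]
      · simpa [Finsupp.erase_apply, hk] using hge k

end CommRing

end MvPolynomial

theorem maximal_not_associated_of_prod_mem_general
    {K : Type*} [Field K] {n s : ℕ}
    (I : Ideal (MvPolynomial (Fin n) K)) (hI : IsMonomialIdeal I)
    (y : Fin s → Fin n) (hy : Function.Injective y)
    (α : Fin s → ℕ)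
    (J : Fin s → Ideal (MvPolynomial (Fin n) K))
    (hJ : ∀ i, MonomialIdealAvoiding {y i} (J i))
    (hIJ : ∀ i, I + Ideal.span {(X (y i) : MvPolynomial (Fin n) K) ^ α i}
        = J i + Ideal.span {(X (y i) : MvPolynomial (Fin n) K) ^ α i})
    (hass : ∀ i,
      Ideal.span ((X : Fin n → MvPolynomial (Fin n) K) '' ({y i}ᶜ)) ∉
        associatedPrimes (MvPolynomial (Fin n) K)
          (MvPolynomial (Fin n) K ⧸ J i))
    (hprod : (∏ i, (X (y i) : MvPolynomial (Fin n) K) ^ α i) ∈ I) :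
    Ideal.span (Set.range (X : Fin n → MvPolynomial (Fin n) K)) ∉
      associatedPrimes (MvPolynomial (Fin n) K)
        (MvPolynomial (Fin n) K ⧸ I) := by
  obtain ⟨S, rfl⟩ := hI
  intro hm
  obtain ⟨e, he, heX⟩ := span_range_X_mem_associatedPrimes_iff.1 hm
  by_cases hdvd : ∀ i, α i ≤ e (y i)
  · exact he (Ideal.mem_of_dvd _ (prod_X_pow_dvd_monomial hy hdvd) hprod)
  push Not at hdvd
  obtain ⟨i, hi⟩ := hdvd
  have hmi : Ideal.span (Set.range X) ∈ associatedPrimes (MvPolynomial (Fin n) K)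
      (MvPolynomial (Fin n) K ⧸ J i ⊔ Ideal.span {X (y i) ^ α i}) := by
    rw [← Ideal.add_eq_sup, ← hIJ i, Ideal.add_eq_sup, span_monomial_image_sup_span_X_pow]
    exact span_range_X_mem_associatedPrimes_iff.2
      ⟨e, monomial_one_notMem_span_monomial_image_insert he hi,
        fun j => Ideal.span_mono (Set.image_mono (Set.subset_insert _ _)) (heX j)⟩
  obtain ⟨T, hT, hTJ⟩ := hJ i
  have hassi := hass i
  rw [hTJ] at hmi hassi
  exact hassi (span_X_image_compl_singleton_mem_associatedPrimes (fun g hg => hT g hg _ rfl) hmi)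

/-- Let `I` be a monomial ideal of `R = K[x_1,…,x_n]`,
`m = (x_1,…,x_n)`, and let `y_1,…,y_s` be distinct variables such that for
each `i` there are `α_i ≥ 1` and a monomial ideal `J_i` with
`y_i ∉ supp J_i`, `I + (y_i^{α_i}) = J_i + (y_i^{α_i})` and
`m ∖ y_i ∉ Ass (R / J_i)`.  If `∏ y_i^{α_i} ∈ I`, then `m ∉ Ass (R / I)`. -/
theorem maximal_not_associated_of_prod_mem
    {K : Type*} [Field K] {n s : ℕ}
    (I : Ideal (MvPolynomial (Fin n) K)) (hI : IsMonomialIdeal I)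
    (y : Fin s → Fin n) (hy : Function.Injective y)
    (α : Fin s → ℕ) (hα : ∀ i, 1 ≤ α i)
    (J : Fin s → Ideal (MvPolynomial (Fin n) K))
    (hJ : ∀ i, MonomialIdealAvoiding {y i} (J i))
    (hIJ : ∀ i, I + Ideal.span {(X (y i) : MvPolynomial (Fin n) K) ^ α i}
        = J i + Ideal.span {(X (y i) : MvPolynomial (Fin n) K) ^ α i})
    (hass : ∀ i,
      Ideal.span ((X : Fin n → MvPolynomial (Fin n) K) '' ({y i}ᶜ)) ∉
        associatedPrimes (MvPolynomial (Fin n) K)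
          (MvPolynomial (Fin n) K ⧸ J i))
    (hprod : (∏ i, (X (y i) : MvPolynomial (Fin n) K) ^ α i) ∈ I) :
    Ideal.span (Set.range (X : Fin n → MvPolynomial (Fin n) K)) ∉
      associatedPrimes (MvPolynomial (Fin n) K)
        (MvPolynomial (Fin n) K ⧸ I) :=
  maximal_not_associated_of_prod_mem_general I hI y hy α J hJ hIJ hass hprod
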